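/- If S̃ ⊂ Γ(TΩ) × 𝔡_{ν̃} is such that L(S̃) is smoothly finitely generated (resp. smoothly linearly finitely generated) on Ω′, then the augmented set S = {(∂/∂x_1, (1, 0_{ν̃})), …, (∂/∂x_n, (1, 0_{ν̃}))} ∪ {(X̃, (0, d̃)) : (X̃, d̃) ∈ S̃}, consisting of the Euclidean coordinate fields with degree (1, 0_{ν̃}) together with the original fields, has L(S) smoothly finitely generated (resp. smoothly linearly finitely generated) on Ω′ (with ν = 1 + ν̃ parameters). -/

import Mathlib

open MeasureTheory
open scoped BigOperators Classical

noncomputable section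

/-- Points of `ℝ^m`. -/
abbrev Pt (m : ℕ) := Fin m → ℝ

/-- Vector fields on `ℝ^n` (defined on all of `ℝ^n`; smoothness on the relevant open set
is imposed as a hypothesis where needed). -/
abbrev VF (n : ℕ) := Pt n → Pt n

/-- First-order partial derivative in the `j`-th coordinate direction. -/
noncomputable def pdv {m : ℕ} {E : Type*} [NormedAddCommGroup E] [NormedSpace ℝ E]
    (j : Fin m) (f : Pt m → E) : Pt m → E :=
  fun x => fderiv ℝ f x (Pi.single j 1)

/-- Iterated partial derivative `∂^α`. -/
noncomputable def md {m : ℕ} {E : Type*} [NormedAddCommGroup E] [NormedSpace ℝ E]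
    (α : Fin m → ℕ) (f : Pt m → E) : Pt m → E :=
  (List.finRange m).foldr (fun j g => (pdv j)^[α j] g) f

/-- `δ^d = ∏_μ δ_μ^{d_μ}` (real exponents). -/
noncomputable def dpow {ν : ℕ} (δ d : Fin ν → ℝ) : ℝ := ∏ μ, (δ μ) ^ (d μ)

/-- The unit cube `[0,1]^ν` of multi-parameter radii. -/
def unitCube (ν : ℕ) : Set (Fin ν → ℝ) := {δ | ∀ μ, 0 ≤ δ μ ∧ δ μ ≤ 1}

/-- `d ∈ 𝔡_ν`: the degree `d` is nonzero in precisely one component. -/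
def InD {ν : ℕ} (d : Fin ν → ℝ) : Prop :=
  ∃ μ, d μ ≠ 0 ∧ ∀ μ', μ' ≠ μ → d μ' = 0

/-- Lie bracket of vector fields. -/
noncomputable def vbracket {n : ℕ} (V W : VF n) : VF n :=
  fun x => fderiv ℝ W x (V x) - fderiv ℝ V x (W x)

/-- The unit-scale Carnot–Carathéodory ball of the finite family `Z` centred at `x₀`. -/
def CCBall {n q : ℕ} (Z : Fin q → VF n) (x₀ : Pt n) : Set (Pt n) :=
  {y | ∃ γ : ℝ → Pt n, ∃ a : Fin q → ℝ → ℝ,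
    γ 0 = x₀ ∧ γ 1 = y ∧ (∀ t : ℝ, (∑ j, (a j t) ^ 2) < 1) ∧
    IntervalIntegrable (fun s => ∑ j, a j s • Z j (γ s)) volume 0 1 ∧
    ∀ t ∈ Set.Icc (0 : ℝ) 1,
      γ t = x₀ + ∫ s in (0 : ℝ)..t, ∑ j, a j s • Z j (γ s)}

/-- The multi-parameter Carnot–Carathéodory ball `B_{(X,d)}(x₀,δ)`. -/
def MBall {n ν q : ℕ} (X : Fin q → VF n) (d : Fin q → Fin ν → ℝ)
    (x₀ : Pt n) (δ : Fin ν → ℝ) : Set (Pt n) :=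
  CCBall (fun j x => dpow δ (d j) • X j x) x₀

/-- Derivative of a function along a vector field. -/
noncomputable def vfD {n : ℕ} (V : VF n) (f : Pt n → ℝ) : Pt n → ℝ :=
  fun x => fderiv ℝ f x (V x)

/-- Iterated derivative along a list of vector fields. -/
noncomputable def listD {n : ℕ} (Vs : List (VF n)) (f : Pt n → ℝ) : Pt n → ℝ :=
  Vs.foldr vfD f

/-- `(X,d)` controls `(X₀,h)` on `Ω'`:  there is `τ > 0` so that for every `δ ∈ [0,1]^ν`
and `x ∈ Ω'` one can write `h(δ)·X₀ = Σ_j c_j δ^{d_j} X_j` on `B_{(X,d)}(x, τδ)` with all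
iterated `(δX)`-derivatives of the coefficients uniformly bounded. -/
def ControlsH {n ν q : ℕ} (X : Fin q → VF n) (d : Fin q → Fin ν → ℝ)
    (X₀ : VF n) (h : (Fin ν → ℝ) → ℝ) (Ω' : Set (Pt n)) : Prop :=
  ∃ τ : ℝ, 0 < τ ∧ ∃ c : (Fin ν → ℝ) → Pt n → Fin q → Pt n → ℝ,
    (∀ δ ∈ unitCube ν, ∀ x ∈ Ω',
      (∀ j, ContinuousOn (c δ x j) (MBall X d x (fun μ => τ * δ μ))) ∧
      ∀ y ∈ MBall X d x (fun μ => τ * δ μ),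
        h δ • X₀ y = ∑ j, c δ x j y • (dpow δ (d j) • X j y)) ∧
    (∀ m : ℕ, ∃ C : ℝ, ∀ δ ∈ unitCube ν, ∀ x ∈ Ω', ∀ j, ∀ L : List (Fin q),
      L.length ≤ m → ∀ y ∈ MBall X d x (fun μ => τ * δ μ),
        |listD (L.map (fun i z => dpow δ (d i) • X i z)) (c δ x j) y| ≤ C)

/-- `(X,d)` controls the pair `(X₀,d₀)` on `Ω'`. -/
def ControlsPair {n ν q : ℕ} (X : Fin q → VF n) (d : Fin q → Fin ν → ℝ)
    (p : VF n × (Fin ν → ℝ)) (Ω' : Set (Pt n)) : Prop :=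
  ControlsH X d p.1 (fun δ => dpow δ p.2) Ω'

/-- `(X,d)` smoothly controls `(X₀,h)` on `Ω'` (relative to the ambient open set `Ω`). -/
def SmoothControlsH {n ν q : ℕ} (X : Fin q → VF n) (d : Fin q → Fin ν → ℝ)
    (X₀ : VF n) (h : (Fin ν → ℝ) → ℝ) (Ω' Ω : Set (Pt n)) : Prop :=
  ∃ Ω'' : Set (Pt n), IsOpen Ω'' ∧ closure Ω' ⊆ Ω'' ∧ closure Ω'' ⊆ Ω ∧
    ∃ c : (Fin ν → ℝ) → Fin q → Pt n → ℝ,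
      (∀ δ ∈ unitCube ν, ∀ j, ContDiffOn ℝ (⊤ : ℕ∞) (c δ j) Ω'') ∧
      (∀ δ ∈ unitCube ν, ∀ y ∈ Ω'',
        h δ • X₀ y = ∑ j, c δ j y • (dpow δ (d j) • X j y)) ∧
      (∀ α : Fin n → ℕ, ∃ C : ℝ, ∀ δ ∈ unitCube ν, ∀ j, ∀ y ∈ Ω'',
        |md α (c δ j) y| ≤ C)

/-- `(X,d)` smoothly controls the pair `(X₀,d₀)` on `Ω'`. -/
def SmoothControlsPair {n ν q : ℕ} (X : Fin q → VF n) (d : Fin q → Fin ν → ℝ)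
    (p : VF n × (Fin ν → ℝ)) (Ω' Ω : Set (Pt n)) : Prop :=
  SmoothControlsH X d p.1 (fun δ => dpow δ p.2) Ω' Ω

/-- A (possibly infinite) set `S` controls a pair: some finite subfamily of `S` does. -/
def SetControlsPair {n ν : ℕ} (S : Set (VF n × (Fin ν → ℝ)))
    (p : VF n × (Fin ν → ℝ)) (Ω' : Set (Pt n)) : Prop :=
  ∃ q : ℕ, ∃ X : Fin q → VF n, ∃ d : Fin q → Fin ν → ℝ,
    (∀ j, (X j, d j) ∈ S) ∧ ControlsPair X d p Ω'

def SetSmoothControlsPair {n ν : ℕ} (S : Set (VF n × (Fin ν → ℝ)))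
    (p : VF n × (Fin ν → ℝ)) (Ω' Ω : Set (Pt n)) : Prop :=
  ∃ q : ℕ, ∃ X : Fin q → VF n, ∃ d : Fin q → Fin ν → ℝ,
    (∀ j, (X j, d j) ∈ S) ∧ SmoothControlsPair X d p Ω' Ω

def SetControlsSet {n ν : ℕ} (S T : Set (VF n × (Fin ν → ℝ)))
    (Ω' : Set (Pt n)) : Prop :=
  ∀ p ∈ T, SetControlsPair S p Ω'

def SetSmoothControlsSet {n ν : ℕ} (S T : Set (VF n × (Fin ν → ℝ)))
    (Ω' Ω : Set (Pt n)) : Prop :=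
  ∀ p ∈ T, SetSmoothControlsPair S p Ω' Ω

/-- `S` and `T` are equivalent on `Ω'`: each controls the other. -/
def EquivSets {n ν : ℕ} (S T : Set (VF n × (Fin ν → ℝ))) (Ω' : Set (Pt n)) : Prop :=
  SetControlsSet S T Ω' ∧ SetControlsSet T S Ω'

def EquivSetsS {n ν : ℕ} (S T : Set (VF n × (Fin ν → ℝ))) (Ω' Ω : Set (Pt n)) : Prop :=
  SetSmoothControlsSet S T Ω' Ω ∧ SetSmoothControlsSet T S Ω' Ω

/-- The Lie-bracket generated set `L(S)` as an inductive predicate. -/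
inductive genLie {n ν : ℕ} (S : Set (VF n × (Fin ν → ℝ))) :
    VF n × (Fin ν → ℝ) → Prop
  | base (p : VF n × (Fin ν → ℝ)) : p ∈ S → genLie S p
  | br (p q : VF n × (Fin ν → ℝ)) : genLie S p → genLie S q →
      genLie S (vbracket p.1 q.1, p.2 + q.2)

/-- `L(S)`: the smallest set containing `S` closed under `([X₁,X₂], d₁+d₂)`. -/
def LSet {n ν : ℕ} (S : Set (VF n × (Fin ν → ℝ))) : Set (VF n × (Fin ν → ℝ)) :=
  {p | genLie S p}

/-- Membership in the Lie algebra generated by a set of vector fields. -/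
inductive lieGen {n : ℕ} (V : Set (VF n)) : VF n → Prop
  | base (X : VF n) : X ∈ V → lieGen V X
  | br (X Y : VF n) : lieGen V X → lieGen V Y → lieGen V (vbracket X Y)

/-- Hörmander's condition for `V` on `U`: the Lie algebra generated by `V` spans the
tangent space at every point of `U`. -/
def Hormander {n : ℕ} (V : Set (VF n)) (U : Set (Pt n)) : Prop :=
  ∀ x ∈ U, Submodule.span ℝ {v : Pt n | ∃ X, lieGen V X ∧ v = X x} = ⊤

/-- Brackets of depth at most `m` (so `LD S m` corresponds to the paper's `L_{m+1}(S)`). -/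
inductive genLieD {n ν : ℕ} (S : Set (VF n × (Fin ν → ℝ))) :
    ℕ → VF n × (Fin ν → ℝ) → Prop
  | base (p : VF n × (Fin ν → ℝ)) : p ∈ S → genLieD S 0 p
  | mono (m : ℕ) (p : VF n × (Fin ν → ℝ)) : genLieD S m p → genLieD S (m + 1) p
  | br (k l : ℕ) (p q : VF n × (Fin ν → ℝ)) : genLieD S k p → genLieD S l q →
      genLieD S (k + l + 1) (vbracket p.1 q.1, p.2 + q.2)

def LD {n ν : ℕ} (S : Set (VF n × (Fin ν → ℝ))) (m : ℕ) :
    Set (VF n × (Fin ν → ℝ)) :=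
  {p | genLieD S m p}

/-- `π_μ S`: the elements of `S` whose degree is nonzero only in the `μ`-th component. -/
def piMu {n ν : ℕ} (μ : Fin ν) (S : Set (VF n × (Fin ν → ℝ))) :
    Set (VF n × (Fin ν → ℝ)) :=
  {p ∈ S | ∀ μ', μ' ≠ μ → p.2 μ' = 0}

/-- `σ_K S`: the elements of `S` of degree `|d|₁ ≤ K`. -/
def sigmaK {n ν : ℕ} (K : ℝ) (S : Set (VF n × (Fin ν → ℝ))) :
    Set (VF n × (Fin ν → ℝ)) :=
  {p ∈ S | (∑ μ, |p.2 μ|) ≤ K}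

/-- The multi-parameter dilation `δ t` on `ℝ^N` with exponents `e`. -/
noncomputable def dilVec {N ν : ℕ} (e : Fin N → Fin ν → ℝ) (δ : Fin ν → ℝ)
    (t : Pt N) : Pt N :=
  fun k => dpow δ (e k) * t k

/-- `(X,d)` controls the vector field parameterization `(W,e,N)` on `Ω'`. -/
def ControlsParamH {n ν q N : ℕ} (X : Fin q → VF n) (d : Fin q → Fin ν → ℝ)
    (W : Pt N → VF n) (e : Fin N → Fin ν → ℝ) (Ω' : Set (Pt n)) : Prop :=
  ∃ τ : ℝ, 0 < τ ∧ ∃ ρ₁ : ℝ, 0 < ρ₁ ∧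
    ∃ c : (Fin ν → ℝ) → Pt n → Fin q → Pt N → Pt n → ℝ,
      (∀ δ ∈ unitCube ν, ∀ x₀ ∈ Ω', ∀ t : Pt N, ‖t‖ < ρ₁ →
        ∀ x ∈ MBall X d x₀ (fun μ => τ * δ μ),
          W (dilVec e δ t) x = ∑ j, c δ x₀ j t x • (dpow δ (d j) • X j x)) ∧
      (∀ m : ℕ, ∃ C : ℝ, ∀ δ ∈ unitCube ν, ∀ x₀ ∈ Ω', ∀ j, ∀ L : List (Fin q),
        ∀ β : Fin N → ℕ, L.length + (∑ k, β k) ≤ m → ∀ t : Pt N, ‖t‖ < ρ₁ →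
          ∀ x ∈ MBall X d x₀ (fun μ => τ * δ μ),
            |listD (L.map (fun i z => dpow δ (d i) • X i z))
              (fun z => md β (fun t' => c δ x₀ j t' z) t) x| ≤ C)

/-- `(X,d)` smoothly controls the vector field parameterization `(W,e,N)` on `Ω'`. -/
def SmoothControlsParamH {n ν q N : ℕ} (X : Fin q → VF n) (d : Fin q → Fin ν → ℝ)
    (W : Pt N → VF n) (e : Fin N → Fin ν → ℝ) (Ω' Ω : Set (Pt n)) : Prop :=
  ∃ Ω'' : Set (Pt n), IsOpen Ω'' ∧ closure Ω' ⊆ Ω'' ∧ closure Ω'' ⊆ Ω ∧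
  ∃ ρ₁ : ℝ, 0 < ρ₁ ∧
  ∃ c : (Fin ν → ℝ) → Fin q → Pt N → Pt n → ℝ,
    (∀ δ ∈ unitCube ν, ∀ j, ContDiffOn ℝ (⊤ : ℕ∞)
      (fun p : Pt N × Pt n => c δ j p.1 p.2) (Metric.ball 0 ρ₁ ×ˢ Ω'')) ∧
    (∀ δ ∈ unitCube ν, ∀ t : Pt N, ‖t‖ < ρ₁ → ∀ y ∈ Ω'',
      W (dilVec e δ t) y = ∑ j, c δ j t y • (dpow δ (d j) • X j y)) ∧
    (∀ α : Fin n → ℕ, ∀ β : Fin N → ℕ, ∃ C : ℝ, ∀ δ ∈ unitCube ν, ∀ j,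
      ∀ t : Pt N, ‖t‖ < ρ₁ → ∀ y ∈ Ω'',
        |md α (fun z => md β (fun t' => c δ j t' z) t) y| ≤ C)

def SetControlsParam {n ν N : ℕ} (S : Set (VF n × (Fin ν → ℝ)))
    (W : Pt N → VF n) (e : Fin N → Fin ν → ℝ) (Ω' : Set (Pt n)) : Prop :=
  ∃ q : ℕ, ∃ X : Fin q → VF n, ∃ d : Fin q → Fin ν → ℝ,
    (∀ j, (X j, d j) ∈ S) ∧ ControlsParamH X d W e Ω'

def SetSmoothControlsParam {n ν N : ℕ} (S : Set (VF n × (Fin ν → ℝ)))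
    (W : Pt N → VF n) (e : Fin N → Fin ν → ℝ) (Ω' Ω : Set (Pt n)) : Prop :=
  ∃ q : ℕ, ∃ X : Fin q → VF n, ∃ d : Fin q → Fin ν → ℝ,
    (∀ j, (X j, d j) ∈ S) ∧ SmoothControlsParamH X d W e Ω' Ω

/-- `α! = ∏ (α_k)!`. -/
def mfact {N : ℕ} (α : Fin N → ℕ) : ℝ := ∏ k, (Nat.factorial (α k) : ℝ)

/-- The Taylor coefficient `X_α` of `W(t) ~ Σ_{|α|>0} t^α X_α`. -/
noncomputable def taylorC {n N : ℕ} (W : Pt N → VF n) (α : Fin N → ℕ) : VF n :=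
  fun x => (mfact α)⁻¹ • md α (fun t => W t x) 0

/-- `deg(α) = Σ_k α_k e_k`. -/
def degA {N ν : ℕ} (e : Fin N → Fin ν → ℝ) (α : Fin N → ℕ) : Fin ν → ℝ :=
  fun μ => ∑ k, (α k : ℝ) * e k μ

/-- The set `𝒮 = {(X_α, deg α) : deg α ∈ 𝔡_ν}` of a vector field parameterization. -/
def TaylorS {n N ν : ℕ} (W : Pt N → VF n) (e : Fin N → Fin ν → ℝ) :
    Set (VF n × (Fin ν → ℝ)) :=
  {p | ∃ α : Fin N → ℕ, α ≠ 0 ∧ InD (degA e α) ∧ p = (taylorC W α, degA e α)}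

/-- The set `𝒱 = {(X_α, deg α) : |α| > 0}` of a vector field parameterization. -/
def TaylorV {n N ν : ℕ} (W : Pt N → VF n) (e : Fin N → Fin ν → ℝ) :
    Set (VF n × (Fin ν → ℝ)) :=
  {p | ∃ α : Fin N → ℕ, α ≠ 0 ∧ p = (taylorC W α, degA e α)}

/-- `𝓕₀ = {(X_α, deg α) : deg α ∈ 𝔡_ν, |α| = 1}`: the first-order Taylor coefficients. -/
def TaylorF0 {n N ν : ℕ} (W : Pt N → VF n) (e : Fin N → Fin ν → ℝ) :
    Set (VF n × (Fin ν → ℝ)) :=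
  {p | ∃ α : Fin N → ℕ, (∑ k, α k) = 1 ∧ InD (degA e α) ∧
    p = (taylorC W α, degA e α)}

/-- `T` is finitely generated by `F` on `Ω'`. -/
def SetFinGenBy {n ν : ℕ} (T F : Set (VF n × (Fin ν → ℝ))) (Ω' : Set (Pt n)) : Prop :=
  F.Finite ∧ EquivSets F T Ω'

def SetFinGen {n ν : ℕ} (T : Set (VF n × (Fin ν → ℝ))) (Ω' : Set (Pt n)) : Prop :=
  ∃ F, SetFinGenBy T F Ω'

def SetSmoothFinGenBy {n ν : ℕ} (T F : Set (VF n × (Fin ν → ℝ)))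
    (Ω' Ω : Set (Pt n)) : Prop :=
  F.Finite ∧ EquivSetsS F T Ω' Ω

def SetSmoothFinGen {n ν : ℕ} (T : Set (VF n × (Fin ν → ℝ)))
    (Ω' Ω : Set (Pt n)) : Prop :=
  ∃ F, SetSmoothFinGenBy T F Ω' Ω

def SetLinFinGen {n ν : ℕ} (T : Set (VF n × (Fin ν → ℝ))) (Ω' : Set (Pt n)) : Prop :=
  ∃ F, (∀ p ∈ F, InD p.2) ∧ SetFinGenBy T F Ω'

def SetSmoothLinFinGen {n ν : ℕ} (T : Set (VF n × (Fin ν → ℝ)))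
    (Ω' Ω : Set (Pt n)) : Prop :=
  ∃ F, (∀ p ∈ F, InD p.2) ∧ SetSmoothFinGenBy T F Ω' Ω

/-- `(W,e,N)` is finitely generated by `F` on `Ω'`. -/
def ParamFinGenBy {n ν N : ℕ} (W : Pt N → VF n) (e : Fin N → Fin ν → ℝ)
    (F : Set (VF n × (Fin ν → ℝ))) (Ω' : Set (Pt n)) : Prop :=
  SetControlsParam (LSet (TaylorS W e)) W e Ω' ∧ SetFinGenBy (LSet (TaylorS W e)) F Ω'

def ParamFinGen {n ν N : ℕ} (W : Pt N → VF n) (e : Fin N → Fin ν → ℝ)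
    (Ω' : Set (Pt n)) : Prop :=
  SetControlsParam (LSet (TaylorS W e)) W e Ω' ∧ SetFinGen (LSet (TaylorS W e)) Ω'

def ParamSmoothFinGenBy {n ν N : ℕ} (W : Pt N → VF n) (e : Fin N → Fin ν → ℝ)
    (F : Set (VF n × (Fin ν → ℝ))) (Ω' Ω : Set (Pt n)) : Prop :=
  SetSmoothControlsParam (LSet (TaylorS W e)) W e Ω' Ω ∧
    SetSmoothFinGenBy (LSet (TaylorS W e)) F Ω' Ω

def ParamSmoothFinGen {n ν N : ℕ} (W : Pt N → VF n) (e : Fin N → Fin ν → ℝ)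
    (Ω' Ω : Set (Pt n)) : Prop :=
  SetSmoothControlsParam (LSet (TaylorS W e)) W e Ω' Ω ∧
    SetSmoothFinGen (LSet (TaylorS W e)) Ω' Ω

/-- `F` satisfies `𝒟(Ω')`: it controls all brackets of its own elements. -/
def DCondSet {n ν : ℕ} (F : Set (VF n × (Fin ν → ℝ))) (Ω' : Set (Pt n)) : Prop :=
  ∀ p ∈ F, ∀ p' ∈ F, SetControlsPair F (vbracket p.1 p'.1, p.2 + p'.2) Ω'

/-- `F` satisfies `𝒟_s(Ω')`: it smoothly controls all brackets of its own elements. -/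
def DsCondSet {n ν : ℕ} (F : Set (VF n × (Fin ν → ℝ))) (Ω' Ω : Set (Pt n)) : Prop :=
  ∀ p ∈ F, ∀ p' ∈ F, SetSmoothControlsPair F (vbracket p.1 p'.1, p.2 + p'.2) Ω' Ω

/-- `(W,e,N)` is linearly finitely generated by `F` on `Ω'`. -/
def ParamLinFinGenBy {n ν N : ℕ} (W : Pt N → VF n) (e : Fin N → Fin ν → ℝ)
    (F : Set (VF n × (Fin ν → ℝ))) (Ω' : Set (Pt n)) : Prop :=
  DCondSet (TaylorF0 W e) Ω' ∧ SetControlsParam (TaylorF0 W e) W e Ω' ∧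
    EquivSets (TaylorF0 W e) F Ω'

/-- `(W,e,N)` is smoothly linearly finitely generated by `F` on `Ω'`. -/
def ParamSmoothLinFinGenBy {n ν N : ℕ} (W : Pt N → VF n) (e : Fin N → Fin ν → ℝ)
    (F : Set (VF n × (Fin ν → ℝ))) (Ω' Ω : Set (Pt n)) : Prop :=
  DsCondSet (TaylorF0 W e) Ω' Ω ∧ SetSmoothControlsParam (TaylorF0 W e) W e Ω' Ω ∧
    EquivSetsS (TaylorF0 W e) F Ω' Ω


/-!
Every element of `L(S)` either involves no coordinate field, and is then the lift
`(X̃, (0, d̃))` of an element of `L(S̃)`, or its degree satisfies `d ≥ (1, 0)`. Lifts are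
controlled by the lift of a generating set of `L(S̃)`, since `δ^{(0,d̃)} = δ̃^{d̃}`. In the
second case, writing `X = Σ X_j ∂_j` gives `δ^d X = Σ (δ^{d-(1,0)} X_j) δ^{(1,0)} ∂_j`, and
the coefficients are bounded in `C^∞` near `closure Ω'` because `d - (1,0) ≥ 0` makes
`δ^{d-(1,0)} ≤ 1`. So the coordinate fields together with the lifted generators of `L(S̃)`
generate `L(S)`.
-/

section PartialDerivatives

variable {m : ℕ} {E : Type*} [NormedAddCommGroup E] [NormedSpace ℝ E]

lemma md_mapsTo {s : Set (Pt m → E)} (h : ∀ j, Set.MapsTo (pdv j) s s) (α : Fin m → ℕ) :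
    Set.MapsTo (md α) s s := by
  intro f hf
  unfold md
  induction List.finRange m with
  | nil => exact hf
  | cons j l ih => exact (h j).iterate (α j) ih

lemma md_const_smul (α : Fin m → ℕ) (k : ℝ) (f : Pt m → E) :
    md α (k • f) = k • md α f := by
  have hcomm : ∀ j, Function.Commute (pdv j) (fun g : Pt m → E => k • g) := by
    intro j g
    funext x
    simp only [pdv, fderiv_const_smul_field, Pi.smul_apply, FunLike.coe_smul]
  unfold md
  induction List.finRange m with
  | nil => rfl
  | cons j l ih => rw [List.foldr_cons, List.foldr_cons, ih, ((hcomm j).iterate_left (α j)).eq]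

lemma md_contDiffOn {f : Pt m → E} {Ω : Set (Pt m)} (hΩ : IsOpen Ω)
    (hf : ContDiffOn ℝ (⊤ : ℕ∞) f Ω) (α : Fin m → ℕ) :
    ContDiffOn ℝ (⊤ : ℕ∞) (md α f) Ω :=
  md_mapsTo (s := {f | ContDiffOn ℝ (⊤ : ℕ∞) f Ω})
    (fun _ _ hg => (hg.fderiv_of_isOpen hΩ le_rfl).clm_apply contDiffOn_const) α hf

lemma exists_norm_md_le {f : Pt m → E} {Ω U : Set (Pt m)} (hΩ : IsOpen Ω)
    (hf : ContDiffOn ℝ (⊤ : ℕ∞) f Ω) (hUc : IsCompact (closure U)) (hUΩ : closure U ⊆ Ω)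
    (α : Fin m → ℕ) : ∃ C, ∀ y ∈ U, ‖md α f y‖ ≤ C := by
  obtain ⟨C, hC⟩ :=
    hUc.exists_bound_of_continuousOn ((md_contDiffOn hΩ hf α).continuousOn.mono hUΩ)
  exact ⟨C, fun y hy => hC y (subset_closure hy)⟩

end PartialDerivatives

section Dilations

variable {ν : ℕ}

lemma dpow_nonneg {δ : Fin ν → ℝ} (hδ : δ ∈ unitCube ν) (d : Fin ν → ℝ) : 0 ≤ dpow δ d :=
  Finset.prod_nonneg fun μ _ => Real.rpow_nonneg (hδ μ).1 _

lemma dpow_le_one {δ d : Fin ν → ℝ} (hδ : δ ∈ unitCube ν) (hd : 0 ≤ d) : dpow δ d ≤ 1 :=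
  Finset.prod_le_one (fun μ _ => Real.rpow_nonneg (hδ μ).1 _)
    (fun μ _ => Real.rpow_le_one (hδ μ).1 (hδ μ).2 (hd μ))

lemma dpow_add {δ d e : Fin ν → ℝ} (hδ : δ ∈ unitCube ν) (hd : 0 ≤ d) (he : 0 ≤ e) :
    dpow δ (d + e) = dpow δ d * dpow δ e := by
  simp only [dpow, Pi.add_apply, Real.rpow_add_of_nonneg (hδ _).1 (hd _) (he _),
    Finset.prod_mul_distrib]

lemma tail_mem_unitCube {δ : Fin (ν + 1) → ℝ} (hδ : δ ∈ unitCube (ν + 1)) :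
    Fin.tail δ ∈ unitCube ν := fun μ => hδ μ.succ

lemma Fin.cons_zero_add_cons_zero {α : Type*} [AddZeroClass α] (a b : Fin ν → α) :
    (Fin.cons 0 a : Fin (ν + 1) → α) + Fin.cons 0 b = Fin.cons 0 (a + b) := by
  ext μ
  refine Fin.cases ?_ (fun κ => ?_) μ <;> simp

lemma dpow_cons_zero (δ : Fin (ν + 1) → ℝ) (d : Fin ν → ℝ) :
    dpow δ (Fin.cons 0 d) = dpow (Fin.tail δ) d := by
  simp [dpow, Fin.prod_univ_succ, Fin.tail]

end Dilations

section SmoothControl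

variable {n ν q : ℕ} {X : Fin q → VF n} {d : Fin q → Fin ν → ℝ} {Ω' Ω : Set (Pt n)}

lemma smoothControlsH_of_eq_sum {X₀ : VF n} {h : (Fin ν → ℝ) → ℝ} {U : Set (Pt n)}
    (hΩ : IsOpen Ω) (hU : IsOpen U) (hΩ'U : closure Ω' ⊆ U) (hUΩ : closure U ⊆ Ω)
    (hUc : IsCompact (closure U)) (a : (Fin ν → ℝ) → Fin q → ℝ)
    (ha : ∀ δ ∈ unitCube ν, ∀ j, |a δ j| ≤ 1) (g : Fin q → Pt n → ℝ)
    (hg : ∀ j, ContDiffOn ℝ (⊤ : ℕ∞) (g j) Ω)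
    (heq : ∀ δ ∈ unitCube ν, ∀ y ∈ U,
      h δ • X₀ y = ∑ j, (a δ j * g j y) • (dpow δ (d j) • X j y)) :
    SmoothControlsH X d X₀ h Ω' Ω := by
  refine ⟨U, hU, hΩ'U, hUΩ, fun δ j => a δ j • g j,
    fun δ _ j => contDiffOn_const.smul ((hg j).mono (subset_closure.trans hUΩ)), heq, ?_⟩
  intro α
  choose C hC using fun j => exists_norm_md_le hΩ (hg j) hUc hUΩ α
  obtain ⟨M, hM⟩ := (Set.finite_range C).bddAbove
  refine ⟨M, fun δ hδ j y hy => ?_⟩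
  rw [md_const_smul, Pi.smul_apply, smul_eq_mul, abs_mul]
  calc |a δ j| * |md α (g j) y| ≤ 1 * M :=
        mul_le_mul (ha δ hδ j) ((hC j y hy).trans (hM ⟨j, rfl⟩)) (abs_nonneg _) zero_le_one
    _ = M := one_mul M

lemma SmoothControlsH.cons_zero {X₀ : VF n} {h : (Fin ν → ℝ) → ℝ}
    (hc : SmoothControlsH X d X₀ h Ω' Ω) :
    SmoothControlsH X (fun j => Fin.cons 0 (d j)) X₀ (fun δ => h (Fin.tail δ)) Ω' Ω := by
  obtain ⟨U, hU, hΩ'U, hUΩ, c, hsmooth, heq, hbound⟩ := hc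
  refine ⟨U, hU, hΩ'U, hUΩ, fun δ => c (Fin.tail δ),
    fun δ hδ => hsmooth _ (tail_mem_unitCube hδ), fun δ hδ y hy => ?_, fun α => ?_⟩
  · simpa only [dpow_cons_zero] using heq _ (tail_mem_unitCube hδ) y hy
  · obtain ⟨C, hC⟩ := hbound α
    exact ⟨C, fun δ hδ => hC _ (tail_mem_unitCube hδ)⟩

lemma SetSmoothControlsPair.cons_zero {T : Set (VF n × (Fin ν → ℝ))}
    {T' : Set (VF n × (Fin (ν + 1) → ℝ))} {p : VF n × (Fin ν → ℝ)}
    (hc : SetSmoothControlsPair T p Ω' Ω) (hT : ∀ r ∈ T, (r.1, Fin.cons 0 r.2) ∈ T') :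
    SetSmoothControlsPair T' (p.1, Fin.cons 0 p.2) Ω' Ω := by
  obtain ⟨q, X, d, hmem, hc⟩ := hc
  refine ⟨q, X, fun j => Fin.cons 0 (d j), fun j => hT _ (hmem j), ?_⟩
  simpa only [SmoothControlsPair, dpow_cons_zero] using hc.cons_zero

lemma SetSmoothControlsPair.of_mem {T : Set (VF n × (Fin ν → ℝ))} {p : VF n × (Fin ν → ℝ)}
    {U : Set (Pt n)} (hp : p ∈ T) (hΩ : IsOpen Ω) (hU : IsOpen U) (hΩ'U : closure Ω' ⊆ U)
    (hUΩ : closure U ⊆ Ω) (hUc : IsCompact (closure U)) :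
    SetSmoothControlsPair T p Ω' Ω :=
  ⟨1, ![p.1], ![p.2], fun j => by simpa [Fin.fin_one_eq_zero j] using hp,
    smoothControlsH_of_eq_sum hΩ hU hΩ'U hUΩ hUc (fun _ _ => 1) (by simp) (fun _ _ => 1)
      (fun _ => contDiffOn_const) (by simp)⟩

lemma smoothControlsPair_coord {U : Set (Pt n)} (hΩ : IsOpen Ω) (hU : IsOpen U)
    (hΩ'U : closure Ω' ⊆ U) (hUΩ : closure U ⊆ Ω) (hUc : IsCompact (closure U))
    {e : Fin ν → ℝ} (he : 0 ≤ e) {p : VF n × (Fin ν → ℝ)}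
    (hp : ContDiffOn ℝ (⊤ : ℕ∞) p.1 Ω) (hep : e ≤ p.2) :
    SmoothControlsPair (fun (j : Fin n) _ => Pi.single j 1) (fun _ => e) p Ω' Ω := by
  refine smoothControlsH_of_eq_sum hΩ hU hΩ'U hUΩ hUc (fun δ _ => dpow δ (p.2 - e))
    (fun δ hδ _ => ?_) (fun j y => p.1 y j) (fun j => ?_) (fun δ hδ y _ => ?_)
  · rw [abs_of_nonneg (dpow_nonneg hδ _)]
    exact dpow_le_one hδ (sub_nonneg.mpr hep)
  · exact (ContinuousLinearMap.proj j).contDiff.comp_contDiffOn hp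
  · conv_lhs => rw [← sub_add_cancel p.2 e, dpow_add hδ (sub_nonneg.mpr hep) he]
    ext k
    simp [Finset.sum_apply, Pi.single_apply, mul_comm, mul_left_comm]

end SmoothControl

section LieSets

variable {n ν : ℕ}

lemma vbracket_contDiffOn {V W : VF n} {Ω : Set (Pt n)} (hΩ : IsOpen Ω)
    (hV : ContDiffOn ℝ (⊤ : ℕ∞) V Ω) (hW : ContDiffOn ℝ (⊤ : ℕ∞) W Ω) :
    ContDiffOn ℝ (⊤ : ℕ∞) (vbracket V W) Ω :=
  ((hW.fderiv_of_isOpen hΩ le_rfl).clm_apply hV).sub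
    ((hV.fderiv_of_isOpen hΩ le_rfl).clm_apply hW)

lemma genLie_contDiffOn {S : Set (VF n × (Fin ν → ℝ))} {Ω : Set (Pt n)} (hΩ : IsOpen Ω)
    (hS : ∀ p ∈ S, ContDiffOn ℝ (⊤ : ℕ∞) p.1 Ω) {p : VF n × (Fin ν → ℝ)} (hp : genLie S p) :
    ContDiffOn ℝ (⊤ : ℕ∞) p.1 Ω := by
  induction hp with
  | base p hp => exact hS p hp
  | br p q _ _ ihp ihq => exact vbracket_contDiffOn hΩ ihp ihq

lemma genLie_snd_nonneg {S : Set (VF n × (Fin ν → ℝ))} (hS : ∀ p ∈ S, 0 ≤ p.2)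
    {p : VF n × (Fin ν → ℝ)} (hp : genLie S p) : 0 ≤ p.2 := by
  induction hp with
  | base p hp => exact hS p hp
  | br p q _ _ ihp ihq => exact add_nonneg ihp ihq

lemma genLie_cons_zero {S : Set (VF n × (Fin ν → ℝ))} {T : Set (VF n × (Fin (ν + 1) → ℝ))}
    (hST : ∀ r ∈ S, (r.1, Fin.cons 0 r.2) ∈ T) {p : VF n × (Fin ν → ℝ)} (hp : genLie S p) :
    genLie T (p.1, Fin.cons 0 p.2) := by
  induction hp with
  | base p hp => exact genLie.base _ (hST p hp)
  | br p q _ _ ihp ihq => simpa [Fin.cons_zero_add_cons_zero] using genLie.br _ _ ihp ihq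

def coordAugment (S : Set (VF n × (Fin ν → ℝ))) : Set (VF n × (Fin (ν + 1) → ℝ)) :=
  {p | ∃ i : Fin n, p = ((fun _ => Pi.single i 1), Fin.cons 1 (fun _ => 0))} ∪
  {p | ∃ q ∈ S, p = (q.1, Fin.cons 0 q.2)}

lemma Set.Finite.coordAugment {S : Set (VF n × (Fin ν → ℝ))} (hS : S.Finite) :
    (coordAugment S).Finite := by
  refine ((Set.finite_range fun i : Fin n =>
    (((fun _ => Pi.single i 1) : VF n), (Fin.cons 1 (fun _ => 0) : Fin (ν + 1) → ℝ))).union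
    (hS.image fun q => (q.1, Fin.cons 0 q.2))).subset ?_
  rintro p (⟨i, rfl⟩ | ⟨q, hq, rfl⟩)
  exacts [Or.inl ⟨i, rfl⟩, Or.inr ⟨q, hq, rfl⟩]

lemma coordAugment_inD {S : Set (VF n × (Fin ν → ℝ))} (hS : ∀ p ∈ S, InD p.2) :
    ∀ p ∈ coordAugment S, InD p.2 := by
  rintro p (⟨i, rfl⟩ | ⟨q, hq, rfl⟩)
  · refine ⟨0, by simp, fun μ hμ => ?_⟩
    obtain ⟨κ, rfl⟩ := Fin.eq_succ_of_ne_zero hμ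
    simp
  · obtain ⟨μ, hne, hz⟩ := hS q hq
    refine ⟨μ.succ, by simpa using hne, fun μ' hμ' => ?_⟩
    rcases Fin.eq_zero_or_eq_succ μ' with rfl | ⟨κ, rfl⟩
    · simp
    · simpa using hz κ (fun h => hμ' (h ▸ rfl))

lemma genLie_coordAugment_cases {S : Set (VF n × (Fin ν → ℝ))} (hS : ∀ p ∈ S, 0 ≤ p.2)
    {p : VF n × (Fin (ν + 1) → ℝ)} (hp : genLie (coordAugment S) p) :
    (∃ r ∈ LSet S, p = (r.1, Fin.cons 0 r.2)) ∨ Fin.cons 1 (fun _ => 0) ≤ p.2 := by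
  have hcoord : (0 : Fin (ν + 1) → ℝ) ≤ Fin.cons 1 (fun _ => 0) :=
    Fin.le_cons.mpr ⟨zero_le_one, le_rfl⟩
  have hnonneg : ∀ {r : VF n × (Fin (ν + 1) → ℝ)},
      ((∃ r' ∈ LSet S, r = (r'.1, Fin.cons 0 r'.2)) ∨ Fin.cons 1 (fun _ => 0) ≤ r.2) →
        0 ≤ r.2 := by
    rintro r (⟨r', hr', rfl⟩ | h)
    exacts [Fin.le_cons.mpr ⟨le_rfl, genLie_snd_nonneg hS hr'⟩, hcoord.trans h]
  induction hp with
  | base p hp =>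
    rcases hp with ⟨i, rfl⟩ | ⟨q, hq, rfl⟩
    exacts [Or.inr le_rfl, Or.inl ⟨q, genLie.base _ hq, rfl⟩]
  | br p q _ _ ihp ihq =>
    rcases ihp with ⟨p', hp', rfl⟩ | hp1
    · rcases ihq with ⟨q', hq', rfl⟩ | hq1
      · exact Or.inl ⟨_, genLie.br _ _ hp' hq', by simp [Fin.cons_zero_add_cons_zero]⟩
      · exact Or.inr (le_add_of_nonneg_of_le (hnonneg (Or.inl ⟨p', hp', rfl⟩)) hq1)
    · exact Or.inr (le_add_of_le_of_nonneg hp1 (hnonneg ihq))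

end LieSets

lemma SetSmoothFinGenBy.lSet_coordAugment {n ν : ℕ} {Ω Ω' : Set (Pt n)} (hΩ : IsOpen Ω)
    (hcl : closure Ω' ⊆ Ω) (hcpt : IsCompact (closure Ω')) {S F : Set (VF n × (Fin ν → ℝ))}
    (hSsmooth : ∀ p ∈ S, ContDiffOn ℝ (⊤ : ℕ∞) p.1 Ω) (hSdeg : ∀ p ∈ S, 0 ≤ p.2)
    (hF : SetSmoothFinGenBy (LSet S) F Ω' Ω) :
    SetSmoothFinGenBy (LSet (coordAugment S)) (coordAugment F) Ω' Ω := by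
  obtain ⟨U, hU, hΩ'U, hUΩ, hUc⟩ := exists_open_between_and_isCompact_closure hcpt hΩ hcl
  have hsmooth : ∀ p ∈ coordAugment S, ContDiffOn ℝ (⊤ : ℕ∞) p.1 Ω := by
    rintro p (⟨i, rfl⟩ | ⟨q, hq, rfl⟩)
    exacts [contDiffOn_const, hSsmooth q hq]
  have hcoord : ∀ i : Fin n,
      ((fun _ => Pi.single i 1, Fin.cons 1 (fun _ => 0)) : VF n × (Fin (ν + 1) → ℝ)) ∈
        coordAugment F := fun i => Or.inl ⟨i, rfl⟩
  refine ⟨hF.1.coordAugment, fun p hp => ?_, fun p hp => ?_⟩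
  · rcases genLie_coordAugment_cases hSdeg hp with ⟨r, hr, rfl⟩ | hp1
    · exact (hF.2.1 r hr).cons_zero fun r hr => Or.inr ⟨r, hr, rfl⟩
    · exact ⟨n, _, _, hcoord, smoothControlsPair_coord hΩ hU hΩ'U hUΩ hUc
        (Fin.le_cons.mpr ⟨zero_le_one, le_rfl⟩) (genLie_contDiffOn hΩ hsmooth hp) hp1⟩
  · rcases hp with ⟨i, rfl⟩ | ⟨q, hq, rfl⟩
    · exact .of_mem (genLie.base _ (Or.inl ⟨i, rfl⟩)) hΩ hU hΩ'U hUΩ hUc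
    · exact (hF.2.2 q hq).cons_zero fun r hr =>
        genLie_cons_zero (fun r hr => Or.inr ⟨r, hr, rfl⟩) hr

theorem stmt15_general {n νt : ℕ} (Ω Ω' : Set (Pt n)) (hΩ : IsOpen Ω)
    (hcl : closure Ω' ⊆ Ω) (hcpt : IsCompact (closure Ω'))
    (St : Set (VF n × (Fin νt → ℝ)))
    (hreg : ∀ p ∈ St, ContDiffOn ℝ (⊤ : ℕ∞) p.1 Ω ∧ (∀ μ, 0 ≤ p.2 μ) ∧ InD p.2) :
    letI S : Set (VF n × (Fin (νt + 1) → ℝ)) :=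
      {p | ∃ i : Fin n, p = ((fun _ => Pi.single i 1), Fin.cons 1 (fun _ => 0))} ∪
      {p | ∃ q ∈ St, p = (q.1, Fin.cons 0 q.2)}
    (SetSmoothFinGen (LSet St) Ω' Ω → SetSmoothFinGen (LSet S) Ω' Ω) ∧
    (SetSmoothLinFinGen (LSet St) Ω' Ω → SetSmoothLinFinGen (LSet S) Ω' Ω) := by
  have hgen {F : Set (VF n × (Fin νt → ℝ))} (hF : SetSmoothFinGenBy (LSet St) F Ω' Ω) :=
    hF.lSet_coordAugment hΩ hcl hcpt (fun p hp => (hreg p hp).1) (fun p hp => (hreg p hp).2.1)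
  exact ⟨fun ⟨F, hF⟩ => ⟨coordAugment F, hgen hF⟩,
    fun ⟨F, hFd, hF⟩ => ⟨coordAugment F, coordAugment_inD hFd, hgen hF⟩⟩

/-- If `S̃ ⊂ Γ(TΩ) × 𝔡_ν̃` has `L(S̃)` smoothly finitely generated
(resp. smoothly linearly finitely generated) on `Ω'`, then the augmented set
`S = {(∂/∂x_i, (1,0_ν̃))} ∪ {(X̃,(0,d̃)) : (X̃,d̃) ∈ S̃}` (with `ν = 1 + ν̃` parameters,
the extra parameter first) has `L(S)` smoothly finitely generated (resp. smoothly
linearly finitely generated) on `Ω'`. -/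
theorem stmt15 {n νt : ℕ} (Ω Ω' : Set (Pt n)) (hΩ : IsOpen Ω) (hΩ' : IsOpen Ω')
    (hcl : closure Ω' ⊆ Ω) (hcpt : IsCompact (closure Ω'))
    (St : Set (VF n × (Fin νt → ℝ)))
    (hreg : ∀ p ∈ St, ContDiffOn ℝ (⊤ : ℕ∞) p.1 Ω ∧ (∀ μ, 0 ≤ p.2 μ) ∧ InD p.2) :
    letI S : Set (VF n × (Fin (νt + 1) → ℝ)) :=
      {p | ∃ i : Fin n, p = ((fun _ => Pi.single i 1), Fin.cons 1 (fun _ => 0))} ∪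
      {p | ∃ q ∈ St, p = (q.1, Fin.cons 0 q.2)}
    (SetSmoothFinGen (LSet St) Ω' Ω → SetSmoothFinGen (LSet S) Ω' Ω) ∧
    (SetSmoothLinFinGen (LSet St) Ω' Ω → SetSmoothLinFinGen (LSet S) Ω' Ω) :=
  stmt15_general Ω Ω' hΩ hcl hcpt St hreg

end
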